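/- Gaussian off-diagonal to Hölder-gain estimate: if a Gaussian-type kernel q(t,s,x,y) := (s−t)^{-n²d/2} exp(−c(s−t)|T_{s−t}^{-1}(θ(x) − y)|²) with c > 0 has total mass ∫_{ℝ^{nd}} q(t,s,x,y) dy ≤ C₀ uniformly, then for every γ ∈ (0,1] there exists C such that ∫_{ℝ^{nd}} q(t,s,x,y) d(θ(x), y)^γ dy ≤ C (s−t)^{γ/2} for all 0 ≤ t < s ≤ T. -/

import Mathlib

open scoped BigOperators
open MeasureTheory

/-- The anisotropic quasi-distance on `ℝ^{nd}` realized as `(Fin n × Fin d) → ℝ`: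
`d(u,v) = ∑_i |v_i - u_i|^{1/(2i-1)}` with `|·|` the Euclidean norm of the `i`-th block. -/
noncomputable def quasiDistV (n d : ℕ) (u v : (Fin n × Fin d) → ℝ) : ℝ :=
  ∑ i : Fin n,
    (Real.sqrt (∑ j : Fin d, (v (i, j) - u (i, j)) ^ 2)) ^ ((1 : ℝ) / (2 * (i : ℕ) + 1))

/-- The Gaussian-type kernel
`q(t,s,x,y) = (s-t)^{-n²d/2} exp(-c (s-t) |T_{s-t}⁻¹ (θ(x) - y)|²)`. -/
noncomputable def gaussKer (n d : ℕ) (c : ℝ) (θ : ((Fin n × Fin d) → ℝ) → (Fin n × Fin d) → ℝ)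
    (t s : ℝ) (x y : (Fin n × Fin d) → ℝ) : ℝ :=
  (s - t) ^ (-(((n : ℝ) ^ 2 * (d : ℝ)) / 2)) *
    Real.exp (-(c * (s - t) *
      ∑ p : Fin n × Fin d, ((s - t) ^ (-(((p.1 : ℕ) : ℝ) + 1)) * (θ x p - y p)) ^ 2))

/-!
Write `δ = s - t` and `B = |δ^{1/2} T_δ⁻¹ (y - θ(x))|²`, so that `q = δ^{-n²d/2} e^{-cB}`.
The `i`-th block of `y - θ(x)` has squared length at most `δ^{2i-1} B`, hence contributes at most
`δ^{1/2} (1 + √B)` to the quasi-distance, and `d(θ(x), y)^γ ≤ δ^{γ/2} (1 + n (1 + √B))`.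
Half of the Gaussian absorbs the polynomial factor (`√B e^{-cB/2} ≤ c^{-1/2}`), leaving `δ^{γ/2}`
times the kernel with constant `c/2`. That kernel is a diagonal Gaussian whose variances multiply
to a constant times `δ^{n²d}`, so its mass `(2π/c)^{nd/2}` does not depend on `δ`.
-/

open Real

theorem rpow_le_one_add {x a : ℝ} (hx : 0 ≤ x) (ha₀ : 0 ≤ a) (ha₁ : a ≤ 1) :
    x ^ a ≤ 1 + x := by
  rcases le_total x 1 with hx1 | hx1
  · linarith [rpow_le_one hx hx1 ha₀]
  · linarith [rpow_le_self_of_one_le hx1 ha₁]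

theorem sqrt_mul_exp_neg_mul_le {c B : ℝ} (hc : 0 < c) (hB : 0 ≤ B) :
    √B * exp (-(c * B)) ≤ √(1 / (2 * c)) := by
  rw [← sqrt_sq (exp_pos _).le, ← sqrt_mul hB, ← exp_nat_mul]
  refine sqrt_le_sqrt ?_
  rw [le_div_iff₀ (by positivity)]
  calc B * exp (↑2 * -(c * B)) * (2 * c) = (2 * c * B) * exp (-(2 * c * B)) := by ring_nf
    _ ≤ exp (2 * c * B) * exp (-(2 * c * B)) := by gcongr; linarith [add_one_le_exp (2 * c * B)]
    _ = 1 := by rw [← exp_add, add_neg_cancel, exp_zero]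

theorem sum_fin_two_mul_add_one (n : ℕ) : ∑ i : Fin n, (2 * (i : ℝ) + 1) = n ^ 2 := by
  induction n with
  | zero => simp
  | succ n ih =>
    rw [Fin.sum_univ_castSucc]
    simp only [Fin.val_castSucc, ih, Fin.val_last]
    push_cast
    ring

section DiagonalGaussian

variable {ι : Type*} [Fintype ι]

theorem exp_neg_sum_mul_sq (a z₀ z : ι → ℝ) :
    exp (-∑ i, a i * (z i - z₀ i) ^ 2) = ∏ i, exp (-a i * (z i - z₀ i) ^ 2) := by
  simp only [← exp_sum, neg_mul, Finset.sum_neg_distrib]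

theorem integrable_exp_neg_sum_mul_sq {a : ι → ℝ} (ha : ∀ i, 0 < a i) (z₀ : ι → ℝ) :
    Integrable fun z : ι → ℝ => exp (-∑ i, a i * (z i - z₀ i) ^ 2) := by
  simp only [exp_neg_sum_mul_sq]
  exact Integrable.fintype_prod (f := fun i r => exp (-a i * (r - z₀ i) ^ 2))
    fun i => (integrable_exp_neg_mul_sq (ha i)).comp_sub_right (z₀ i)

theorem integral_exp_neg_sum_mul_sq (a z₀ : ι → ℝ) :
    ∫ z : ι → ℝ, exp (-∑ i, a i * (z i - z₀ i) ^ 2) = ∏ i, √(π / a i) := by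
  simp only [exp_neg_sum_mul_sq]
  rw [integral_fintype_prod_volume_eq_prod (fun i r => exp (-a i * (r - z₀ i) ^ 2))]
  refine Finset.prod_congr rfl fun i _ => ?_
  rw [integral_sub_right_eq_self (fun r => exp (-a i * r ^ 2)), integral_gaussian]

end DiagonalGaussian

section Kernel

variable {n d : ℕ} (θ : ((Fin n × Fin d) → ℝ) → (Fin n × Fin d) → ℝ)

/-- `|δ^{1/2} T_δ⁻¹ z|²`; blocks are indexed from `0`, so block `i` carries `δ^{-(2i+1)}`. -/
noncomputable def rescaledSqNorm (n d : ℕ) (δ : ℝ) (z : (Fin n × Fin d) → ℝ) : ℝ :=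
  ∑ p : Fin n × Fin d, δ ^ (-(2 * ((p.1 : ℕ) : ℝ) + 1)) * z p ^ 2

theorem rescaledSqNorm_nonneg {δ : ℝ} (hδ : 0 ≤ δ) (z : (Fin n × Fin d) → ℝ) :
    0 ≤ rescaledSqNorm n d δ z :=
  Finset.sum_nonneg fun _ _ => by positivity

theorem quasiDistV_nonneg (u v : (Fin n × Fin d) → ℝ) : 0 ≤ quasiDistV n d u v :=
  Finset.sum_nonneg fun _ _ => by positivity

theorem gaussKer_nonneg {c t s : ℝ} (hts : t ≤ s) (x y : (Fin n × Fin d) → ℝ) :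
    0 ≤ gaussKer n d c θ t s x y := by
  have : 0 ≤ s - t := sub_nonneg.mpr hts
  unfold gaussKer
  positivity

theorem gaussKer_eq {c t s : ℝ} (hts : t < s) (x y : (Fin n × Fin d) → ℝ) :
    gaussKer n d c θ t s x y = (s - t) ^ (-(((n : ℝ) ^ 2 * (d : ℝ)) / 2)) *
      exp (-(c * rescaledSqNorm n d (s - t) (y - θ x))) := by
  have hδ : 0 < s - t := sub_pos.mpr hts
  have hweight (k : ℝ) : (s - t) * ((s - t) ^ (-(k + 1))) ^ 2 = (s - t) ^ (-(2 * k + 1)) := by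
    rw [← rpow_natCast, ← rpow_mul hδ.le, mul_comm, ← rpow_add_one hδ.ne']
    ring_nf
  unfold gaussKer rescaledSqNorm
  rw [mul_assoc c, Finset.mul_sum]
  congr 4
  refine Finset.sum_congr rfl fun p _ => ?_
  rw [Pi.sub_apply, ← hweight]
  ring

theorem gaussKer_eq_exp_sum {c t s : ℝ} (hts : t < s) (x y : (Fin n × Fin d) → ℝ) :
    gaussKer n d c θ t s x y = (s - t) ^ (-(((n : ℝ) ^ 2 * (d : ℝ)) / 2)) *
      exp (-∑ p, c * (s - t) ^ (-(2 * ((p.1 : ℕ) : ℝ) + 1)) * (y p - θ x p) ^ 2) := by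
  simp only [gaussKer_eq θ hts, rescaledSqNorm, Finset.mul_sum, mul_assoc, Pi.sub_apply]

theorem integrable_gaussKer {c t s : ℝ} (hc : 0 < c) (hts : t < s) (x : (Fin n × Fin d) → ℝ) :
    Integrable (gaussKer n d c θ t s x) := by
  have hδ : 0 < s - t := sub_pos.mpr hts
  simp only [funext (gaussKer_eq_exp_sum θ hts x)]
  exact (integrable_exp_neg_sum_mul_sq (fun p => by positivity) (θ x)).const_mul _

theorem integral_gaussKer {c t s : ℝ} (hts : t < s) (x : (Fin n × Fin d) → ℝ) :
    ∫ y, gaussKer n d c θ t s x y = √(π / c) ^ (n * d) := by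
  have hδ : 0 < s - t := sub_pos.mpr hts
  have hfactor (k : ℝ) : √(π / (c * (s - t) ^ (-k))) = √(π / c) * (s - t) ^ (k / 2) := by
    rw [rpow_neg hδ.le, div_mul_eq_div_div, div_inv_eq_mul, sqrt_mul' _ (rpow_nonneg hδ.le k),
      sqrt_eq_rpow ((s - t) ^ k), ← rpow_mul hδ.le]
    ring_nf
  have hexponent :
      ∑ p : Fin n × Fin d, (2 * ((p.1 : ℕ) : ℝ) + 1) / 2 = (n : ℝ) ^ 2 * d / 2 := by
    rw [Fintype.sum_prod_type]
    simp only [Finset.sum_const, Finset.card_univ, Fintype.card_fin, nsmul_eq_mul]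
    rw [← Finset.mul_sum, ← Finset.sum_div, sum_fin_two_mul_add_one]
    ring
  simp only [gaussKer_eq_exp_sum θ hts, integral_const_mul, integral_exp_neg_sum_mul_sq, hfactor,
    Finset.prod_mul_distrib, Finset.prod_const, Finset.card_univ, Fintype.card_prod,
    Fintype.card_fin, ← rpow_sum_of_pos hδ, hexponent]
  rw [mul_left_comm, ← rpow_add hδ, neg_add_cancel, rpow_zero, mul_one]

theorem sqrt_rpow_one_div_le_of_rpow_neg_mul_le {δ S B k : ℝ} (hδ : 0 < δ) (hS : 0 ≤ S)
    (hk : 1 ≤ k) (hSB : δ ^ (-k) * S ≤ B) :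
    √S ^ (1 / k) ≤ δ ^ (1 / 2 : ℝ) * (1 + √B) := by
  have hS_le : S ≤ δ ^ k * B := by
    rwa [rpow_neg hδ.le, inv_mul_le_iff₀ (rpow_pos_of_pos hδ k)] at hSB
  have hB : 0 ≤ B := le_trans (by positivity) hSB
  calc √S ^ (1 / k) ≤ (δ ^ (k / 2) * √B) ^ (1 / k) := by
        gcongr
        rw [show δ ^ (k / 2) = √(δ ^ k) by rw [sqrt_eq_rpow, ← rpow_mul hδ.le]; ring_nf,
          ← sqrt_mul (by positivity)]
        exact sqrt_le_sqrt hS_le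
    _ = δ ^ (1 / 2 : ℝ) * √B ^ (1 / k) := by
        rw [mul_rpow (by positivity) (sqrt_nonneg B), ← rpow_mul hδ.le]
        field_simp
    _ ≤ δ ^ (1 / 2 : ℝ) * (1 + √B) := by
        gcongr
        exact rpow_le_one_add (sqrt_nonneg B) (by positivity) (div_le_one_of_le₀ hk (by linarith))

theorem quasiDistV_le {δ : ℝ} (hδ : 0 < δ) (u v : (Fin n × Fin d) → ℝ) :
    quasiDistV n d u v ≤ δ ^ (1 / 2 : ℝ) * (n * (1 + √(rescaledSqNorm n d δ (v - u)))) := by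
  have hblock (i : Fin n) : δ ^ (-(2 * ((i : ℕ) : ℝ) + 1)) * ∑ j, (v (i, j) - u (i, j)) ^ 2 ≤
      rescaledSqNorm n d δ (v - u) := by
    rw [rescaledSqNorm, Fintype.sum_prod_type, Finset.mul_sum]
    exact Finset.single_le_sum (f := fun i : Fin n => ∑ j : Fin d,
        δ ^ (-(2 * ((i : ℕ) : ℝ) + 1)) * (v - u) (i, j) ^ 2)
      (fun i _ => Finset.sum_nonneg fun j _ => by positivity) (Finset.mem_univ i)
  calc quasiDistV n d u v
      ≤ ∑ _i : Fin n, δ ^ (1 / 2 : ℝ) * (1 + √(rescaledSqNorm n d δ (v - u))) :=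
        Finset.sum_le_sum fun i _ => sqrt_rpow_one_div_le_of_rpow_neg_mul_le hδ
          (Finset.sum_nonneg fun j _ => sq_nonneg _) (by simp) (hblock i)
    _ = δ ^ (1 / 2 : ℝ) * (n * (1 + √(rescaledSqNorm n d δ (v - u)))) := by
        rw [Finset.sum_const, Finset.card_univ, Fintype.card_fin, nsmul_eq_mul]
        ring

theorem quasiDistV_rpow_le {δ γ : ℝ} (hδ : 0 < δ) (hγ₀ : 0 ≤ γ) (hγ₁ : γ ≤ 1)
    (u v : (Fin n × Fin d) → ℝ) :
    quasiDistV n d u v ^ γ ≤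
      δ ^ (γ / 2) * (1 + n * (1 + √(rescaledSqNorm n d δ (v - u)))) := by
  have hB := rescaledSqNorm_nonneg (n := n) (d := d) hδ.le (v - u)
  calc quasiDistV n d u v ^ γ
      ≤ (δ ^ (1 / 2 : ℝ) * (n * (1 + √(rescaledSqNorm n d δ (v - u))))) ^ γ :=
        rpow_le_rpow (quasiDistV_nonneg u v) (quasiDistV_le hδ u v) hγ₀
    _ = δ ^ (γ / 2) * (n * (1 + √(rescaledSqNorm n d δ (v - u)))) ^ γ := by
        rw [mul_rpow (by positivity) (by positivity), ← rpow_mul hδ.le]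
        ring_nf
    _ ≤ δ ^ (γ / 2) * (1 + n * (1 + √(rescaledSqNorm n d δ (v - u)))) := by
        gcongr
        exact rpow_le_one_add (by positivity) hγ₀ hγ₁

theorem gaussKer_mul_quasiDistV_rpow_le {c γ t s : ℝ} (hc : 0 < c) (hγ₀ : 0 ≤ γ) (hγ₁ : γ ≤ 1)
    (hts : t < s) (x y : (Fin n × Fin d) → ℝ) :
    gaussKer n d c θ t s x y * quasiDistV n d (θ x) y ^ γ ≤
      (s - t) ^ (γ / 2) * (1 + n * (1 + √(1 / c))) * gaussKer n d (c / 2) θ t s x y := by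
  have hδ : 0 < s - t := sub_pos.mpr hts
  set B := rescaledSqNorm n d (s - t) (y - θ x)
  have hB : 0 ≤ B := rescaledSqNorm_nonneg hδ.le _
  have habsorb : (1 + n * (1 + √B)) * exp (-(c / 2 * B)) ≤ 1 + n * (1 + √(1 / c)) := by
    have hsqrt := sqrt_mul_exp_neg_mul_le (half_pos hc) hB
    rw [mul_div_cancel₀ c two_ne_zero] at hsqrt
    have hexp : exp (-(c / 2 * B)) ≤ 1 := exp_le_one_iff.mpr (by nlinarith)
    have hn : (0 : ℝ) ≤ n := n.cast_nonneg
    nlinarith [exp_pos (-(c / 2 * B))]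
  have hweighted : exp (-(c / 2 * B)) * quasiDistV n d (θ x) y ^ γ ≤
      (s - t) ^ (γ / 2) * (1 + n * (1 + √(1 / c))) :=
    calc _ ≤ exp (-(c / 2 * B)) * ((s - t) ^ (γ / 2) * (1 + n * (1 + √B))) := by
          gcongr
          exact quasiDistV_rpow_le hδ hγ₀ hγ₁ (θ x) y
      _ = (s - t) ^ (γ / 2) * ((1 + n * (1 + √B)) * exp (-(c / 2 * B))) := by ring
      _ ≤ _ := by gcongr
  have hsplit : exp (-(c * B)) = exp (-(c / 2 * B)) * exp (-(c / 2 * B)) := by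
    rw [← exp_add]; ring_nf
  rw [gaussKer_eq θ hts, gaussKer_eq θ hts, hsplit]
  calc _ = (s - t) ^ (-(((n : ℝ) ^ 2 * (d : ℝ)) / 2)) * exp (-(c / 2 * B)) *
        (exp (-(c / 2 * B)) * quasiDistV n d (θ x) y ^ γ) := by ring
    _ ≤ _ := mul_le_mul_of_nonneg_left hweighted (by positivity)
    _ = _ := by ring

end Kernel

theorem gaussKer_holder_gain_general (n d : ℕ)
    (T c : ℝ) (hc : 0 < c)
    (θ : ((Fin n × Fin d) → ℝ) → (Fin n × Fin d) → ℝ) :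
    ∀ γ : ℝ, 0 < γ → γ ≤ 1 → ∃ C : ℝ,
      ∀ t s : ℝ, 0 ≤ t → t < s → s ≤ T → ∀ x : (Fin n × Fin d) → ℝ,
        (∫ y : (Fin n × Fin d) → ℝ,
            gaussKer n d c θ t s x y * quasiDistV n d (θ x) y ^ γ)
          ≤ C * (s - t) ^ (γ / 2) := by
  intro γ hγ₀ hγ₁
  set K : ℝ := 1 + n * (1 + √(1 / c))
  refine ⟨K * √(π / (c / 2)) ^ (n * d), fun t s _ hts _ x => ?_⟩
  calc _ ≤ ∫ y, (s - t) ^ (γ / 2) * K * gaussKer n d (c / 2) θ t s x y :=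
        integral_mono_of_nonneg
          (.of_forall fun y =>
            mul_nonneg (gaussKer_nonneg θ hts.le x y) (rpow_nonneg (quasiDistV_nonneg _ _) γ))
          ((integrable_gaussKer θ (half_pos hc) hts x).const_mul _)
          (.of_forall (gaussKer_mul_quasiDistV_rpow_le θ hc hγ₀.le hγ₁ hts x))
    _ = K * √(π / (c / 2)) ^ (n * d) * (s - t) ^ (γ / 2) := by
        rw [integral_const_mul, integral_gaussKer θ hts]
        ring

/-- Gaussian off-diagonal to Hölder-gain estimate.  If the kernel `q` has
total mass `∫ q(t,s,x,y) dy ≤ C₀` uniformly over `0 ≤ t < s ≤ T` and `x`, then for every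
`γ ∈ (0,1]` there is `C` with
`∫ q(t,s,x,y) d(θ(x),y)^γ dy ≤ C (s-t)^{γ/2}` for all `0 ≤ t < s ≤ T` and all `x`. -/
theorem gaussKer_holder_gain (n d : ℕ) (hn : 1 ≤ n) (hd : 1 ≤ d)
    (T c : ℝ) (hT : 0 < T) (hc : 0 < c)
    (θ : ((Fin n × Fin d) → ℝ) → (Fin n × Fin d) → ℝ) (C₀ : ℝ)
    (hmass : ∀ t s : ℝ, 0 ≤ t → t < s → s ≤ T → ∀ x : (Fin n × Fin d) → ℝ,
      (∫ y : (Fin n × Fin d) → ℝ, gaussKer n d c θ t s x y) ≤ C₀) :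
    ∀ γ : ℝ, 0 < γ → γ ≤ 1 → ∃ C : ℝ,
      ∀ t s : ℝ, 0 ≤ t → t < s → s ≤ T → ∀ x : (Fin n × Fin d) → ℝ,
        (∫ y : (Fin n × Fin d) → ℝ,
            gaussKer n d c θ t s x y * quasiDistV n d (θ x) y ^ γ)
          ≤ C * (s - t) ^ (γ / 2) :=
  gaussKer_holder_gain_general n d T c hc θ
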